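/- arXiv:1702.02239 — 5 statements merged into one kernel-verified Lean document; each statement's English description precedes it below -/
import Mathlib

section
/- Let n_j : ℝ → E (j=1,…,N) be differentiable maps with derivatives ṅ_j such that {n_j(t)} is an orthonormal basis of E for every t, and let Θ_j : ℝ → ℝ be differentiable with Θ_j'(t) = θ_j(t). Then U(t) = Σ_j e^{iΘ_j(t)} |n_j(t)⟩⟨n_j(0)| is differentiable in t and i·U'(t) ∘ U(t)† = i Σ_j ( |ṅ_j(t)⟩⟨n_j(t)| + i θ_j(t) |n_j(t)⟩⟨n_j(t)| ), i.e. the Hamiltonian generating U is the shortcut Hamiltonian H_SA(t). -/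
/-- The rank-one operator `|u⟩⟨v| : z ↦ ⟪v, z⟫ • u`. -/
noncomputable def ketBra {E : Type*} [NormedAddCommGroup E] [InnerProductSpace ℂ E]
    (u v : E) : E →L[ℂ] E :=
  (innerSL ℂ v).smulRight u

/-- The shortcut (transitionless) Hamiltonian
`H_SA(t) = i Σ_j ( |ṅ_j(t)⟩⟨n_j(t)| + i θ_j(t) |n_j(t)⟩⟨n_j(t)| )`. -/
noncomputable def HSA {E : Type*} [NormedAddCommGroup E] [InnerProductSpace ℂ E]
    {N : ℕ} (n n' : Fin N → ℝ → E) (θ : Fin N → ℝ → ℝ) (t : ℝ) : E →L[ℂ] E :=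
  Complex.I • ∑ j : Fin N,
    (ketBra (n' j t) (n j t) + (Complex.I * (θ j t : ℂ)) • ketBra (n j t) (n j t))

/-!
Write `U(t) = Σ_j |m_j(t)⟩⟨n_j(0)|` with `m_j = e^{iΘ_j} n_j`, so that `U'(t) = Σ_j |m_j'(t)⟩⟨n_j(0)|`
and `U(t)† = Σ_j |n_j(0)⟩⟨m_j(t)|`. Orthonormality of the `n_j(0)` collapses the product to
`Σ_j |m_j'(t)⟩⟨m_j(t)|`, and since `m_j' = e^{iΘ_j} (ṅ_j + iθ_j n_j)` and `|e^{iΘ_j}| = 1`, the phases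
cancel in each rank-one term.
-/

section KetBra

variable {E : Type*} [NormedAddCommGroup E] [InnerProductSpace ℂ E]

theorem ketBra_apply (u v z : E) : ketBra u v z = inner ℂ v z • u := rfl

theorem ketBra_add_left (u u' v : E) : ketBra (u + u') v = ketBra u v + ketBra u' v := by
  ext z
  simp [ketBra_apply]

theorem ketBra_smul_left (c : ℂ) (u v : E) : ketBra (c • u) v = c • ketBra u v := by
  ext z
  simp [ketBra_apply, smul_comm c]

theorem ketBra_smul_right (c : ℂ) (u v : E) :
    ketBra u (c • v) = (starRingEnd ℂ) c • ketBra u v := by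
  ext z
  simp [ketBra_apply, mul_comm _ ((starRingEnd ℂ) c), mul_smul]

theorem ketBra_smul_smul_of_norm_eq_one {c : ℂ} (hc : ‖c‖ = 1) (u v : E) :
    ketBra (c • u) (c • v) = ketBra u v := by
  rw [ketBra_smul_left, ketBra_smul_right, smul_smul, Complex.mul_conj,
    Complex.normSq_eq_norm_sq, hc]
  simp

theorem adjoint_ketBra [CompleteSpace E] (u v : E) :
    ContinuousLinearMap.adjoint (ketBra u v) = ketBra v u := by
  refine ((ContinuousLinearMap.eq_adjoint_iff _ _).2 fun x y => ?_).symm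
  simp [ketBra_apply, inner_smul_left, inner_smul_right, mul_comm]

theorem sum_ketBra_comp_sum_ketBra {ι : Type*} [Fintype ι] {b : ι → E} (hb : Orthonormal ℂ b)
    (u v : ι → E) :
    (∑ i, ketBra (u i) (b i)).comp (∑ j, ketBra (b j) (v j)) = ∑ i, ketBra (u i) (v i) := by
  classical
  ext z
  simp [ketBra_apply, orthonormal_iff_ite.mp hb]

theorem HasDerivAt.ketBra_left {f : ℝ → E} {f' : E} {t : ℝ} (hf : HasDerivAt f f' t) (v : E) :
    HasDerivAt (fun s => ketBra (f s) v) (ketBra f' v) t :=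
  (((ContinuousLinearMap.smulRightL ℂ E E (innerSL ℂ v)).restrictScalars ℝ).hasFDerivAt
    (x := f t)).comp_hasDerivAt t hf

end KetBra

theorem HasDerivAt.cexp_I_mul_smul {E : Type*} [NormedAddCommGroup E] [NormedSpace ℂ E]
    {f : ℝ → E} {f' : E} {Θ : ℝ → ℝ} {θ t : ℝ} (hf : HasDerivAt f f' t)
    (hΘ : HasDerivAt Θ θ t) :
    HasDerivAt (fun s => Complex.exp (Complex.I * Θ s) • f s)
      (Complex.exp (Complex.I * Θ t) • (f' + (Complex.I * θ) • f t)) t := by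
  refine ((hΘ.ofReal_comp.const_mul Complex.I).cexp.fun_smul hf).congr_deriv ?_
  rw [smul_add, smul_smul]

theorem hamiltonian_of_transitionless_evolution_general
    {E : Type*} [NormedAddCommGroup E] [InnerProductSpace ℂ E] [FiniteDimensional ℂ E]
    {N : ℕ} (n n' : Fin N → ℝ → E) (Θ θ : Fin N → ℝ → ℝ)
    (hON : ∀ t : ℝ, Orthonormal ℂ (fun j : Fin N => n j t))
    (hn : ∀ (j : Fin N) (t : ℝ), HasDerivAt (n j) (n' j t) t)
    (hΘ : ∀ (j : Fin N) (t : ℝ), HasDerivAt (Θ j) (θ j t) t)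
    (U : ℝ → E →L[ℂ] E)
    (hU : ∀ t : ℝ,
      U t = ∑ j : Fin N, Complex.exp (Complex.I * (Θ j t : ℂ)) • ketBra (n j t) (n j 0)) :
    ∀ t : ℝ, ∃ D : E →L[ℂ] E, HasDerivAt U D t ∧
      Complex.I • (D.comp (ContinuousLinearMap.adjoint (U t))) = HSA n n' θ t := by
  intro t
  set phase : Fin N → ℂ := fun j => Complex.exp (Complex.I * Θ j t)
  have hphase : ∀ j, ‖phase j‖ = 1 := fun j => by simp [phase]
  have hU' : U = fun s => ∑ j, ketBra (Complex.exp (Complex.I * Θ j s) • n j s) (n j 0) := by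
    ext1 s
    simp only [hU, ketBra_smul_left]
  refine ⟨∑ j, ketBra (phase j • (n' j t + (Complex.I * θ j t) • n j t)) (n j 0), ?_, ?_⟩
  · rw [hU']
    exact HasDerivAt.fun_sum fun j _ => ((hn j t).cexp_I_mul_smul (hΘ j t)).ketBra_left (n j 0)
  · have hadj : ContinuousLinearMap.adjoint (U t) = ∑ j, ketBra (n j 0) (phase j • n j t) := by
      simp only [hU', map_sum, adjoint_ketBra, phase]
    rw [hadj, sum_ketBra_comp_sum_ketBra (hON 0), HSA]
    simp only [ketBra_smul_smul_of_norm_eq_one (hphase _), ketBra_add_left, ketBra_smul_left]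

/-- `U(t) = Σ_j e^{iΘ_j(t)} |n_j(t)⟩⟨n_j(0)|` is differentiable in `t` and
`i U'(t) ∘ U(t)† = H_SA(t)`, the shortcut Hamiltonian. -/
theorem hamiltonian_of_transitionless_evolution
    {E : Type*} [NormedAddCommGroup E] [InnerProductSpace ℂ E] [FiniteDimensional ℂ E]
    {N : ℕ} (n n' : Fin N → ℝ → E) (Θ θ : Fin N → ℝ → ℝ)
    (hON : ∀ t : ℝ, Orthonormal ℂ (fun j : Fin N => n j t))
    (hspan : ∀ t : ℝ, Submodule.span ℂ (Set.range (fun j : Fin N => n j t)) = ⊤)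
    (hn : ∀ (j : Fin N) (t : ℝ), HasDerivAt (n j) (n' j t) t)
    (hΘ : ∀ (j : Fin N) (t : ℝ), HasDerivAt (Θ j) (θ j t) t)
    (U : ℝ → E →L[ℂ] E)
    (hU : ∀ t : ℝ,
      U t = ∑ j : Fin N, Complex.exp (Complex.I * (Θ j t : ℂ)) • ketBra (n j t) (n j 0)) :
    ∀ t : ℝ, ∃ D : E →L[ℂ] E, HasDerivAt U D t ∧
      Complex.I • (D.comp (ContinuousLinearMap.adjoint (U t))) = HSA n n' θ t :=
  hamiltonian_of_transitionless_evolution_general n n' Θ θ hON hn hΘ U hU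
end

section
/- (Theorem 1, integral form.) Let n_j : ℝ → E (j=1,…,N) be continuously differentiable maps with derivatives ṅ_j such that {n_j(t)} is an orthonormal basis of E for every t, let τ > 0, and let θ_j : ℝ → ℝ be continuous. Define θ_j^min(t) = −i⟪ṅ_j(t), n_j(t)⟫ (a real-valued function). Then the energy cost Σ_SA(τ) = (1/τ) ∫₀^τ √(Re Tr[H_SA(t)²]) dt computed with the phases θ_j is greater than or equal to the energy cost computed with the phases θ_j^min. -/
/-- The energy cost `Σ_SA(τ) = (1/τ) ∫₀^τ √(Re Tr[H_SA(t)²]) dt` over total time `τ`. -/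
noncomputable def energyCost {E : Type*} [NormedAddCommGroup E] [InnerProductSpace ℂ E]
    [FiniteDimensional ℂ E]
    {N : ℕ} (n n' : Fin N → ℝ → E) (θ : Fin N → ℝ → ℝ) (τ : ℝ) : ℝ :=
  (1 / τ) * ∫ t in (0:ℝ)..τ,
    Real.sqrt ((LinearMap.trace ℂ E
      (((HSA n n' θ t).comp (HSA n n' θ t) : E →L[ℂ] E) : E →ₗ[ℂ] E)).re)

/-! In the orthonormal basis `n_j(t)` the shortcut Hamiltonian is `H₀(t) − D_θ(t)`, where `H₀` is
the Hamiltonian with zero phases and `D_θ = Σ_j θ_j |n_j⟩⟨n_j|`. Expanding the square,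
`Re Tr (H₀ − D_θ)² = Re Tr H₀² + Σ_j ((θ_j − c_j)² − c_j²)` with `c_j = Re ⟪n_j, H₀ n_j⟫`, and
`c_j = θ_j^min`. So at every time the integrand is smallest for the phases `θ^min`, and averaging
over the time interval preserves the inequality. -/

open scoped InnerProductSpace Interval
open InnerProductSpace (rankOne)

lemma intervalAverage_mono {f g : ℝ → ℝ} {a b : ℝ}
    (hf : IntervalIntegrable f MeasureTheory.volume a b)
    (hg : IntervalIntegrable g MeasureTheory.volume a b) (hfg : ∀ x ∈ Ι a b, f x ≤ g x) :
    ⨍ x in a..b, f x ≤ ⨍ x in a..b, g x := by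
  rw [MeasureTheory.setAverage_eq, MeasureTheory.setAverage_eq]
  exact smul_le_smul_of_nonneg_left
    (MeasureTheory.setIntegral_mono_on hf.def' hg.def' measurableSet_uIoc hfg) (by positivity)

namespace OrthonormalBasis

variable {E ι : Type*} [NormedAddCommGroup E] [InnerProductSpace ℂ E] [Fintype ι]
  (b : OrthonormalBasis ι ℂ E)

noncomputable def diagonalOperator (θ : ι → ℝ) : E →L[ℂ] E :=
  ∑ j, (θ j : ℂ) • rankOne ℂ (b j) (b j)

lemma diagonalOperator_apply_self (θ : ι → ℝ) (k : ι) :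
    b.diagonalOperator θ (b k) = (θ k : ℂ) • b k := by
  classical
  simp [diagonalOperator, b.inner_eq_ite]

lemma inner_diagonalOperator_apply (θ : ι → ℝ) (k : ι) (x : E) :
    ⟪b k, b.diagonalOperator θ x⟫_ℂ = θ k * ⟪b k, x⟫_ℂ := by
  classical
  simp [diagonalOperator, b.inner_eq_ite, mul_comm]

lemma inner_sub_diagonalOperator_sq_apply_self (T : E →L[ℂ] E) (θ : ι → ℝ) (k : ι) :
    ⟪b k, (T - b.diagonalOperator θ) ((T - b.diagonalOperator θ) (b k))⟫_ℂ =
      ⟪b k, T (T (b k))⟫_ℂ - 2 * θ k * ⟪b k, T (b k)⟫_ℂ + (θ k : ℂ) ^ 2 := by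
  simp only [sub_apply, diagonalOperator_apply_self, map_sub, map_smul,
    inner_sub_right, inner_smul_right, inner_diagonalOperator_apply, b.inner_eq_one]
  ring

lemma re_trace_sub_diagonalOperator_sq (T : E →L[ℂ] E) (θ : ι → ℝ) :
    (LinearMap.trace ℂ E
        ((T - b.diagonalOperator θ) ∘L (T - b.diagonalOperator θ) : E →L[ℂ] E)).re =
      (LinearMap.trace ℂ E (T ∘L T : E →L[ℂ] E)).re +
        ∑ k, ((θ k - (⟪b k, T (b k)⟫_ℂ).re) ^ 2 - (⟪b k, T (b k)⟫_ℂ).re ^ 2) := by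
  simp only [LinearMap.trace_eq_sum_inner _ b, Complex.re_sum, ← Finset.sum_add_distrib,
    ContinuousLinearMap.coe_coe, ContinuousLinearMap.comp_apply,
    inner_sub_diagonalOperator_sq_apply_self]
  refine Finset.sum_congr rfl fun k _ => ?_
  simp only [Complex.add_re, Complex.sub_re, Complex.mul_re, ← Complex.ofReal_pow,
    Complex.ofReal_re, Complex.ofReal_im]
  norm_num
  ring

lemma re_trace_sub_diagonalOperator_sq_le (T : E →L[ℂ] E) (θ : ι → ℝ) :
    (LinearMap.trace ℂ E ((T - b.diagonalOperator fun k => (⟪b k, T (b k)⟫_ℂ).re) ∘L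
        (T - b.diagonalOperator fun k => (⟪b k, T (b k)⟫_ℂ).re) : E →L[ℂ] E)).re ≤
      (LinearMap.trace ℂ E
        ((T - b.diagonalOperator θ) ∘L (T - b.diagonalOperator θ) : E →L[ℂ] E)).re := by
  rw [re_trace_sub_diagonalOperator_sq, re_trace_sub_diagonalOperator_sq]
  gcongr _ + ∑ k, (?_ - _) with k
  rw [sub_self, zero_pow two_ne_zero]
  exact sq_nonneg _

end OrthonormalBasis

section ShortcutHamiltonian

variable {E : Type*} [NormedAddCommGroup E] [InnerProductSpace ℂ E] {N : ℕ}

lemma ketBra_eq_rankOne (u v : E) : ketBra u v = rankOne ℂ u v := rfl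

@[fun_prop]
lemma Continuous.ketBra {u v : ℝ → E} (hu : Continuous u) (hv : Continuous v) :
    Continuous fun t => ketBra (u t) (v t) :=
  ((ContinuousLinearMap.smulRightL ℂ E E).continuous.comp
    ((innerSL ℂ).continuous.comp hv)).clm_apply hu

variable (n n' : Fin N → ℝ → E)

lemma HSA_eq_sub_diagonalOperator (θ : Fin N → ℝ → ℝ) (t : ℝ)
    (b : OrthonormalBasis (Fin N) ℂ E) (hb : ∀ j, b j = n j t) :
    HSA n n' θ t = HSA n n' 0 t - b.diagonalOperator (θ · t) := by
  simp only [HSA, OrthonormalBasis.diagonalOperator, hb, Pi.zero_apply, Complex.ofReal_zero,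
    mul_zero, zero_smul, add_zero, Finset.sum_add_distrib, smul_add, Finset.smul_sum, smul_smul]
  simp [← mul_assoc, ketBra_eq_rankOne, sub_eq_add_neg]

lemma HSA_zero_apply_self {t : ℝ} (hON : Orthonormal ℂ (n · t)) (k : Fin N) :
    HSA n n' 0 t (n k t) = Complex.I • n' k t := by
  classical
  simp [HSA, ketBra, orthonormal_iff_ite.mp hON]

lemma re_trace_HSA_sq_le (θ θmin : Fin N → ℝ → ℝ) (t : ℝ)
    (hON : Orthonormal ℂ (n · t)) (hspan : Submodule.span ℂ (Set.range (n · t)) = ⊤)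
    (hθmin : ∀ j, θmin j t = (-Complex.I * ⟪n' j t, n j t⟫_ℂ).re) :
    (LinearMap.trace ℂ E (HSA n n' θmin t ∘L HSA n n' θmin t : E →L[ℂ] E)).re ≤
      (LinearMap.trace ℂ E (HSA n n' θ t ∘L HSA n n' θ t : E →L[ℂ] E)).re := by
  let b := OrthonormalBasis.mk hON hspan.ge
  have hb : ∀ j, b j = n j t := fun j => by simp [b]
  have hθmin_diag : (θmin · t) = fun k => (⟪b k, HSA n n' 0 t (b k)⟫_ℂ).re := by
    ext k
    rw [hθmin, hb, HSA_zero_apply_self n n' hON, inner_smul_right]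
    simp only [neg_mul, Complex.neg_re, Complex.mul_re, Complex.I_re, Complex.I_im]
    rw [← inner_conj_symm (n' k t), Complex.conj_re, Complex.conj_im]
    ring
  rw [HSA_eq_sub_diagonalOperator n n' θ t b hb, HSA_eq_sub_diagonalOperator n n' θmin t b hb,
    hθmin_diag]
  exact b.re_trace_sub_diagonalOperator_sq_le _ _

lemma continuous_HSA (θ : Fin N → ℝ → ℝ) (hn : ∀ j, Continuous (n j))
    (hn' : ∀ j, Continuous (n' j)) (hθ : ∀ j, Continuous (θ j)) : Continuous (HSA n n' θ) := by
  unfold HSA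
  fun_prop

variable [FiniteDimensional ℂ E]

lemma continuous_re_trace_comp_self {H : ℝ → E →L[ℂ] E} (hH : Continuous H) :
    Continuous fun t => (LinearMap.trace ℂ E (H t ∘L H t : E →L[ℂ] E)).re :=
  Complex.continuous_re.comp
    ((LinearMap.trace ℂ E ∘ₗ ContinuousLinearMap.coeLM ℂ).continuous_of_finiteDimensional.comp
      (hH.clm_comp hH))

end ShortcutHamiltonian

theorem energy_cost_minimized_by_optimal_phases_general
    {E : Type*} [NormedAddCommGroup E] [InnerProductSpace ℂ E] [FiniteDimensional ℂ E]
    {N : ℕ} (n n' : Fin N → ℝ → E)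
    (hON : ∀ t : ℝ, Orthonormal ℂ (fun j : Fin N => n j t))
    (hspan : ∀ t : ℝ, Submodule.span ℂ (Set.range (fun j : Fin N => n j t)) = ⊤)
    (hn : ∀ (j : Fin N) (t : ℝ), HasDerivAt (n j) (n' j t) t)
    (hn' : ∀ j : Fin N, Continuous (n' j))
    (τ : ℝ)
    (θ : Fin N → ℝ → ℝ) (hθ : ∀ j : Fin N, Continuous (θ j))
    (θmin : Fin N → ℝ → ℝ)
    (hθmin : ∀ (j : Fin N) (t : ℝ),
      θmin j t = (-Complex.I * (inner ℂ (n' j t) (n j t) : ℂ)).re) :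
    energyCost n n' θ τ ≥ energyCost n n' θmin τ := by
  have hn_cont : ∀ j, Continuous (n j) := fun j =>
    continuous_iff_continuousAt.2 fun t => (hn j t).continuousAt
  have hθmin_cont : ∀ j, Continuous (θmin j) := fun j => by
    simp only [funext (hθmin j)]
    fun_prop
  have hcost_cont : ∀ φ : Fin N → ℝ → ℝ, (∀ j, Continuous (φ j)) → Continuous fun t =>
      √(LinearMap.trace ℂ E (HSA n n' φ t ∘L HSA n n' φ t : E →L[ℂ] E)).re := fun φ hφ =>
    (continuous_re_trace_comp_self (continuous_HSA n n' φ hn_cont hn' hφ)).sqrt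
  have hcost_eq : ∀ φ, energyCost n n' φ τ = ⨍ t in (0 : ℝ)..τ,
      √(LinearMap.trace ℂ E (HSA n n' φ t ∘L HSA n n' φ t : E →L[ℂ] E)).re := fun φ => by
    rw [interval_average_eq, energyCost, sub_zero, one_div, smul_eq_mul]
  rw [ge_iff_le, hcost_eq, hcost_eq]
  exact intervalAverage_mono ((hcost_cont θmin hθmin_cont).intervalIntegrable _ _)
    ((hcost_cont θ hθ).intervalIntegrable _ _)
    fun t _ => Real.sqrt_le_sqrt (re_trace_HSA_sq_le n n' θ θmin t (hON t) (hspan t) (hθmin · t))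

/-- Theorem 1, integral form: the energy cost computed with arbitrary continuous phases
`θ_j` is at least the energy cost computed with the optimal phases
`θ_j^min(t) = −i⟪ṅ_j(t), n_j(t)⟫`. -/
theorem energy_cost_minimized_by_optimal_phases
    {E : Type*} [NormedAddCommGroup E] [InnerProductSpace ℂ E] [FiniteDimensional ℂ E]
    {N : ℕ} (n n' : Fin N → ℝ → E)
    (hON : ∀ t : ℝ, Orthonormal ℂ (fun j : Fin N => n j t))
    (hspan : ∀ t : ℝ, Submodule.span ℂ (Set.range (fun j : Fin N => n j t)) = ⊤)
    (hn : ∀ (j : Fin N) (t : ℝ), HasDerivAt (n j) (n' j t) t)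
    (hn' : ∀ j : Fin N, Continuous (n' j))
    (τ : ℝ) (hτ : 0 < τ)
    (θ : Fin N → ℝ → ℝ) (hθ : ∀ j : Fin N, Continuous (θ j))
    (θmin : Fin N → ℝ → ℝ)
    (hθmin : ∀ (j : Fin N) (t : ℝ),
      θmin j t = (-Complex.I * (inner ℂ (n' j t) (n j t) : ℂ)).re) :
    energyCost n n' θ τ ≥ energyCost n n' θmin τ :=
  energy_cost_minimized_by_optimal_phases_general n n' hON hspan hn hn' τ θ hθ θmin hθmin
end

section
/- Let ϑ : ℝ → ℝ be differentiable and define E_−(s) = (cos(ϑ(s)/2), sin(ϑ(s)/2)) and E_+(s) = (−sin(ϑ(s)/2), cos(ϑ(s)/2)) in ℂ². Then the counter-diabatic Landau–Zener Hamiltonian satisfies i( |E_−'(s)⟩⟨E_−(s)| + |E_+'(s)⟩⟨E_+(s)| ) = (ϑ'(s)/2) σ_y as 2×2 complex matrices, where E_±' is the componentwise derivative. In particular, if ϑ(s) = ϑ₀ s is linear, this Hamiltonian is the constant matrix (ϑ₀/2)σ_y. -/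
open Matrix Complex

noncomputable def σy : Matrix (Fin 2) (Fin 2) ℂ := !![0, -Complex.I; Complex.I, 0]

/-- The outer-product matrix `|u⟩⟨v| = u v†`, with entries `u_a · conj(v_b)`. -/
noncomputable def outer (u v : Fin 2 → ℂ) : Matrix (Fin 2) (Fin 2) ℂ :=
  Matrix.of fun a b => u a * (starRingEnd ℂ) (v b)

/-!
The frame `(E_−, E_+)` is the standard basis rotated by `ϑ/2`, so it obeys the frame equations
`E_−' = (ϑ'/2) E_+` and `E_+' = -(ϑ'/2) E_−`. The Hamiltonian is therefore
`(ϑ'/2) · i(|E_+⟩⟨E_−| - |E_−⟩⟨E_+|)`, and since `E_+` is `E_−` turned by a right angle, the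
bracket is the rotation generator `!![0, -1; 1, 0] = -i σ_y`, whatever the angle.
-/

noncomputable def frameMinus (t : ℝ) : Fin 2 → ℂ :=
  ![(Real.cos (t / 2) : ℂ), (Real.sin (t / 2) : ℂ)]

noncomputable def framePlus (t : ℝ) : Fin 2 → ℂ :=
  ![-(Real.sin (t / 2) : ℂ), (Real.cos (t / 2) : ℂ)]

lemma outer_smul_left (c : ℂ) (u v : Fin 2 → ℂ) : outer (c • u) v = c • outer u v := by
  ext a b
  simp [outer, mul_assoc]

lemma I_smul_outer_framePlus_sub_outer_frameMinus (t : ℝ) :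
    Complex.I • (outer (framePlus t) (frameMinus t) - outer (frameMinus t) (framePlus t)) = σy := by
  have hsc : (Real.sin (t / 2) : ℂ) ^ 2 + (Real.cos (t / 2) : ℂ) ^ 2 = 1 := by
    exact_mod_cast Real.sin_sq_add_cos_sq (t / 2)
  ext a b
  fin_cases a <;> fin_cases b <;>
    simp only [outer, framePlus, frameMinus, σy, Fin.zero_eta, Fin.mk_one, Matrix.smul_apply,
      Matrix.sub_apply, of_apply, cons_val', cons_val_zero, cons_val_one, cons_val_fin_one,
      conj_ofReal, map_neg, smul_eq_mul]
  · ring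
  · linear_combination -Complex.I * hsc
  · linear_combination Complex.I * hsc
  · ring

section FrameDerivative

variable {θ : ℝ → ℝ} {θ' s : ℝ}

lemma hasDerivAt_frameMinus (h : HasDerivAt θ θ' s) :
    HasDerivAt (fun u => frameMinus (θ u)) (((θ' / 2 : ℝ) : ℂ) • framePlus (θ s)) s := by
  have hhalf := h.div_const 2
  refine hasDerivAt_pi.2 fun i => ?_
  fin_cases i
  · simpa [frameMinus, framePlus, mul_comm] using hhalf.cos.ofReal_comp
  · simpa [frameMinus, framePlus, mul_comm] using hhalf.sin.ofReal_comp

lemma hasDerivAt_framePlus (h : HasDerivAt θ θ' s) :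
    HasDerivAt (fun u => framePlus (θ u)) (-((θ' / 2 : ℝ) : ℂ) • frameMinus (θ s)) s := by
  have hhalf := h.div_const 2
  refine hasDerivAt_pi.2 fun i => ?_
  fin_cases i
  · simpa [frameMinus, framePlus, mul_comm] using hhalf.sin.ofReal_comp.fun_neg
  · simpa [frameMinus, framePlus, mul_comm] using hhalf.cos.ofReal_comp

end FrameDerivative

/-- The counter-diabatic Landau–Zener Hamiltonian satisfies
`i(|E_−'(s)⟩⟨E_−(s)| + |E_+'(s)⟩⟨E_+(s)|) = (ϑ'(s)/2) σ_y`; in particular, for the linear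
interpolation `ϑ(s) = ϑ₀ s` it is the constant matrix `(ϑ₀/2) σ_y`. -/
theorem counter_diabatic_landau_zener
    (ϑ ϑ' : ℝ → ℝ) (hϑ : ∀ s : ℝ, HasDerivAt ϑ (ϑ' s) s)
    (Em Ep Em' Ep' : ℝ → Fin 2 → ℂ)
    (hEm : ∀ s : ℝ, Em s = ![(Real.cos (ϑ s / 2) : ℂ), (Real.sin (ϑ s / 2) : ℂ)])
    (hEp : ∀ s : ℝ, Ep s = ![-(Real.sin (ϑ s / 2) : ℂ), (Real.cos (ϑ s / 2) : ℂ)])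
    (hEm' : ∀ (s : ℝ) (i : Fin 2), HasDerivAt (fun u : ℝ => Em u i) (Em' s i) s)
    (hEp' : ∀ (s : ℝ) (i : Fin 2), HasDerivAt (fun u : ℝ => Ep u i) (Ep' s i) s) :
    (∀ s : ℝ,
      Complex.I • (outer (Em' s) (Em s) + outer (Ep' s) (Ep s))
        = ((ϑ' s / 2 : ℝ) : ℂ) • σy) ∧
    (∀ ϑ₀ : ℝ, (∀ s : ℝ, ϑ s = ϑ₀ * s) →
      ∀ s : ℝ,
        Complex.I • (outer (Em' s) (Em s) + outer (Ep' s) (Ep s))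
          = ((ϑ₀ / 2 : ℝ) : ℂ) • σy) := by
  have hamiltonian : ∀ s : ℝ,
      Complex.I • (outer (Em' s) (Em s) + outer (Ep' s) (Ep s))
        = ((ϑ' s / 2 : ℝ) : ℂ) • σy := by
    intro s
    have hEm_eq : Em = fun u => frameMinus (ϑ u) := funext hEm
    have hEp_eq : Ep = fun u => framePlus (ϑ u) := funext hEp
    have hm : Em' s = ((ϑ' s / 2 : ℝ) : ℂ) • framePlus (ϑ s) :=
      (hasDerivAt_pi.2 (hEm' s)).unique (hEm_eq ▸ hasDerivAt_frameMinus (hϑ s))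
    have hp : Ep' s = -((ϑ' s / 2 : ℝ) : ℂ) • frameMinus (ϑ s) :=
      (hasDerivAt_pi.2 (hEp' s)).unique (hEp_eq ▸ hasDerivAt_framePlus (hϑ s))
    rw [hm, hp, hEm_eq, hEp_eq, outer_smul_left, outer_smul_left,
      ← I_smul_outer_framePlus_sub_outer_frameMinus (ϑ s), neg_smul, ← sub_eq_add_neg, ← smul_sub,
      smul_comm]
  refine ⟨hamiltonian, fun ϑ₀ hlin s => ?_⟩
  obtain rfl : ϑ = (ϑ₀ * ·) := funext hlin
  rw [hamiltonian s, (hϑ s).unique (hasDerivAt_const_mul ϑ₀)]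
end

section
/- Let φ₀, ξ ∈ ℝ and define E_{−,ξ}(s) = (cos(φ₀ s/2), e^{iξ} sin(φ₀ s/2)) and E_{+,ξ}(s) = (−sin(φ₀ s/2), e^{iξ} cos(φ₀ s/2)) in ℂ². Then for every s ∈ ℝ, i( |d_s E_{−,ξ}(s)⟩⟨E_{−,ξ}(s)| + |d_s E_{+,ξ}(s)⟩⟨E_{+,ξ}(s)| ) = (φ₀/2)( cos ξ · σ_y − sin ξ · σ_x ) as 2×2 complex matrices; in particular the transitionless quantum-gate Hamiltonian is independent of s. -/
open Matrix Complex

/-!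
With `θ = φ₀ s / 2`, `a = (1, 0)` and `b = (0, e^{iξ})`, the two states are the rotated pair
`E₋ = cos θ • a + sin θ • b`, `E₊ = -sin θ • a + cos θ • b`. Hence `d_s E₋ = (φ₀/2) E₊` and
`d_s E₊ = -(φ₀/2) E₋`, so the Hamiltonian is `(iφ₀/2)(|E₊⟩⟨E₋| - |E₋⟩⟨E₊|)`. This antisymmetric
combination is invariant under rotating the pair (because `cos² θ + sin² θ = 1`), so it equals
`(iφ₀/2)(|b⟩⟨a| - |a⟩⟨b|)`, which is the stated combination of Pauli matrices.
-/

noncomputable def σx : Matrix (Fin 2) (Fin 2) ℂ := !![0, 1; 1, 0]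
lemma outer_eq_vecMulVec (u v : Fin 2 → ℂ) : outer u v = vecMulVec u (star v) := rfl

section Rotation

variable {m : Type*} (a b : m → ℂ)

lemma hasDerivAt_cos_smul_add_sin_smul [Fintype m] {θ : ℝ → ℝ} {θ' s : ℝ}
    (hθ : HasDerivAt θ θ' s) :
    HasDerivAt (fun u => (Real.cos (θ u) : ℂ) • a + (Real.sin (θ u) : ℂ) • b)
      ((θ' : ℂ) • (-(Real.sin (θ s) : ℂ) • a + (Real.cos (θ s) : ℂ) • b)) s := by
  refine ((hθ.cos.ofReal_comp.smul_const a).add (hθ.sin.ofReal_comp.smul_const b)).congr_deriv ?_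
  ext i
  simp only [Pi.add_apply, Pi.smul_apply, smul_eq_mul]
  push_cast
  ring

lemma hasDerivAt_neg_sin_smul_add_cos_smul [Fintype m] {θ : ℝ → ℝ} {θ' s : ℝ}
    (hθ : HasDerivAt θ θ' s) :
    HasDerivAt (fun u => -(Real.sin (θ u) : ℂ) • a + (Real.cos (θ u) : ℂ) • b)
      (-(θ' : ℂ) • ((Real.cos (θ s) : ℂ) • a + (Real.sin (θ s) : ℂ) • b)) s := by
  refine ((hθ.sin.ofReal_comp.neg.smul_const a).add
    (hθ.cos.ofReal_comp.smul_const b)).congr_deriv ?_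
  ext i
  simp only [Pi.add_apply, Pi.smul_apply, smul_eq_mul]
  push_cast
  ring

lemma vecMulVec_deriv_rotate_add {c s : ℝ} (h : c ^ 2 + s ^ 2 = 1) (ω : ℂ) :
    vecMulVec (ω • (-(s : ℂ) • a + (c : ℂ) • b)) (star ((c : ℂ) • a + (s : ℂ) • b))
        + vecMulVec (-ω • ((c : ℂ) • a + (s : ℂ) • b)) (star (-(s : ℂ) • a + (c : ℂ) • b))
      = ω • (vecMulVec b (star a) - vecMulVec a (star b)) := by
  have h' : (c : ℂ) ^ 2 + (s : ℂ) ^ 2 = 1 := by exact_mod_cast h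
  ext i j
  simp only [Matrix.add_apply, Matrix.sub_apply, Matrix.smul_apply, vecMulVec_apply,
    Pi.add_apply, Pi.smul_apply, Pi.star_apply, smul_eq_mul, star_add, star_mul', star_neg,
    Complex.star_def, conj_ofReal]
  linear_combination ω * (b i * starRingEnd ℂ (a j) - a i * starRingEnd ℂ (b j)) * h'

end Rotation

lemma I_smul_vecMulVec_sub_eq_pauli (ξ : ℝ) :
    I • (vecMulVec ![0, exp (I * ξ)] (star ![1, 0])
        - vecMulVec ![1, 0] (star ![0, exp (I * ξ)]))
      = (Real.cos ξ : ℂ) • σy - (Real.sin ξ : ℂ) • σx := by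
  have hexp : exp (I * ξ) = Real.cos ξ + Real.sin ξ * I := by
    rw [mul_comm, exp_mul_I, ofReal_cos, ofReal_sin]
  ext i j
  simp only [Matrix.smul_apply, Matrix.sub_apply, vecMulVec_apply, Pi.star_apply]
  fin_cases i <;> fin_cases j <;>
    simp [σx, σy, hexp, conj_ofReal, -ofReal_cos, -ofReal_sin] <;>
    linear_combination (Real.sin ξ : ℂ) * I_sq

/-- The transitionless quantum-gate Hamiltonian
`i(|d_s E_{−,ξ}(s)⟩⟨E_{−,ξ}(s)| + |d_s E_{+,ξ}(s)⟩⟨E_{+,ξ}(s)|)` equals the constant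
matrix `(φ₀/2)(cos ξ σ_y − sin ξ σ_x)`; in particular it is independent of `s`. -/
theorem transitionless_gate_hamiltonian (φ₀ ξ : ℝ)
    (Em Ep Em' Ep' : ℝ → Fin 2 → ℂ)
    (hEm : ∀ s : ℝ, Em s = ![(Real.cos (φ₀ * s / 2) : ℂ),
      Complex.exp (Complex.I * (ξ : ℂ)) * (Real.sin (φ₀ * s / 2) : ℂ)])
    (hEp : ∀ s : ℝ, Ep s = ![-(Real.sin (φ₀ * s / 2) : ℂ),
      Complex.exp (Complex.I * (ξ : ℂ)) * (Real.cos (φ₀ * s / 2) : ℂ)])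
    (hEm' : ∀ (s : ℝ) (i : Fin 2), HasDerivAt (fun u : ℝ => Em u i) (Em' s i) s)
    (hEp' : ∀ (s : ℝ) (i : Fin 2), HasDerivAt (fun u : ℝ => Ep u i) (Ep' s i) s) :
    ∀ s : ℝ,
      Complex.I • (outer (Em' s) (Em s) + outer (Ep' s) (Ep s))
        = ((φ₀ / 2 : ℝ) : ℂ) • ((Real.cos ξ : ℂ) • σy - (Real.sin ξ : ℂ) • σx) := by
  intro s
  set a : Fin 2 → ℂ := ![1, 0]
  set b : Fin 2 → ℂ := ![0, exp (I * ξ)]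
  set θ : ℝ → ℝ := fun u => φ₀ * u / 2
  have hθ : HasDerivAt θ (φ₀ / 2) s := by
    simpa [θ, div_eq_mul_inv, mul_assoc] using ((hasDerivAt_id s).div_const 2).const_mul φ₀
  have hEm_rot : Em = fun u => (Real.cos (θ u) : ℂ) • a + (Real.sin (θ u) : ℂ) • b := by
    funext u i; fin_cases i <;> simp [hEm, a, b, θ, mul_comm]
  have hEp_rot : Ep = fun u => -(Real.sin (θ u) : ℂ) • a + (Real.cos (θ u) : ℂ) • b := by
    funext u i; fin_cases i <;> simp [hEp, a, b, θ, mul_comm]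
  have hEm'_eq : Em' s = ((φ₀ / 2 : ℝ) : ℂ) •
      (-(Real.sin (θ s) : ℂ) • a + (Real.cos (θ s) : ℂ) • b) := by
    refine (hasDerivAt_pi.2 (hEm' s)).unique ?_
    rw [hEm_rot]
    exact hasDerivAt_cos_smul_add_sin_smul a b hθ
  have hEp'_eq : Ep' s = -((φ₀ / 2 : ℝ) : ℂ) •
      ((Real.cos (θ s) : ℂ) • a + (Real.sin (θ s) : ℂ) • b) := by
    refine (hasDerivAt_pi.2 (hEp' s)).unique ?_
    rw [hEp_rot]
    exact hasDerivAt_neg_sin_smul_add_cos_smul a b hθ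
  rw [outer_eq_vecMulVec, outer_eq_vecMulVec, hEm'_eq, hEp'_eq, congrFun hEm_rot s,
    congrFun hEp_rot s, vecMulVec_deriv_rotate_add a b (Real.cos_sq_add_sin_sq (θ s)),
    smul_comm, I_smul_vecMulVec_sub_eq_pauli]
end

section
/- There exists a unique φ* ∈ (0, π) satisfying tan(φ*/2) = φ*. The function f(φ) = φ / sin²(φ/2) attains a strict global minimum on the interval (0, π] at φ = φ*, and moreover 0.74·π < φ* < 0.745·π. (This φ* ≈ 0.742π is the angle minimizing the average energy cost φ₀ · csc²(φ₀/2) of the probabilistic counter-diabatic quantum gate implementation.) -/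
/-!
Write `h(φ) = tan (φ / 2) - φ`. Since `f'(φ) = cos (φ / 2) / sin (φ / 2) ^ 3 * h(φ)` on `(0, π)`,
`f` decreases exactly where `h < 0` and increases where `h > 0`. The function `h` is strictly
convex on `[0, π)` (its derivative `1 / (2 cos² (φ / 2)) - 1` increases) and vanishes at `0`, so it
has at most one further zero `φ*` in `(0, π)`, is negative before it and positive after it.
Taylor bounds for `sin` and `cos` show `h(0.74 π) < 0 < h(0.745 π)`, which locates `φ*`.
-/

open Real Set

section StrictConvexOn

variable {𝕜 β : Type*} [Field 𝕜] [LinearOrder 𝕜] [IsStrictOrderedRing 𝕜]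
  [AddCommMonoid β] [LinearOrder β] [IsOrderedAddMonoid β] [Module 𝕜 β] [PosSMulStrictMono 𝕜 β]
  {s : Set 𝕜} {f : 𝕜 → β} {a b x : 𝕜}

theorem StrictConvexOn.neg_of_mem_Ioo (hf : StrictConvexOn 𝕜 s f) (ha : a ∈ s) (hb : b ∈ s)
    (hfa : f a = 0) (hfb : f b = 0) (hx : x ∈ Ioo a b) : f x < 0 := by
  simpa [hfa, hfb] using
    hf.lt_on_openSegment ha hb (hx.1.trans hx.2).ne (Ioo_subset_openSegment hx)

theorem StrictConvexOn.pos_of_lt (hf : StrictConvexOn 𝕜 s f) (ha : a ∈ s) (hx : x ∈ s)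
    (hfa : f a = 0) (hfb : f b = 0) (hab : a < b) (hbx : b < x) : 0 < f x := by
  simpa [hfa, hfb] using
    hf.lt_on_openSegment ha hx (hab.trans hbx).ne (Ioo_subset_openSegment ⟨hab, hbx⟩)

end StrictConvexOn

lemma cos_half_pos {φ : ℝ} (hφ : φ ∈ Ico 0 π) : 0 < cos (φ / 2) :=
  cos_pos_of_mem_Ioo ⟨by linarith [pi_pos, hφ.1], by linarith [hφ.2]⟩

lemma sin_half_pos {φ : ℝ} (hφ : φ ∈ Ioc 0 π) : 0 < sin (φ / 2) :=
  sin_pos_of_pos_of_lt_pi (by linarith [hφ.1]) (by linarith [pi_pos, hφ.2])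

noncomputable def tanHalfSub (φ : ℝ) : ℝ := tan (φ / 2) - φ

lemma tanHalfSub_zero : tanHalfSub 0 = 0 := by
  simp [tanHalfSub]

lemma hasDerivAt_tanHalfSub {φ : ℝ} (hφ : cos (φ / 2) ≠ 0) :
    HasDerivAt tanHalfSub (1 / cos (φ / 2) ^ 2 / 2 - 1) φ := by
  have hhalf : HasDerivAt (fun x : ℝ ↦ x / 2) (1 / 2) φ := (hasDerivAt_id φ).div_const 2
  refine (((hasDerivAt_tan hφ).comp φ hhalf).sub (hasDerivAt_id φ)).congr_deriv ?_
  ring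

lemma continuousOn_tanHalfSub : ContinuousOn tanHalfSub (Ico 0 π) := fun _ hφ ↦
  (hasDerivAt_tanHalfSub (cos_half_pos hφ).ne').continuousAt.continuousWithinAt

lemma strictConvexOn_tanHalfSub : StrictConvexOn ℝ (Ico 0 π) tanHalfSub := by
  refine StrictMonoOn.strictConvexOn_of_deriv (convex_Ico 0 π) continuousOn_tanHalfSub ?_
  rw [interior_Ico]
  intro φ hφ ψ hψ hφψ
  have hψ₀ := cos_half_pos (Ioo_subset_Ico_self hψ)
  have hcos : cos (ψ / 2) < cos (φ / 2) :=
    cos_lt_cos_of_nonneg_of_le_pi (by linarith [hφ.1]) (by linarith [hψ.2, pi_pos]) (by linarith)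
  rw [(hasDerivAt_tanHalfSub (cos_half_pos (Ioo_subset_Ico_self hφ)).ne').deriv,
    (hasDerivAt_tanHalfSub hψ₀.ne').deriv]
  gcongr

lemma tanHalfSub_eq_cos_div_sin_sub (φ : ℝ) :
    tanHalfSub φ = cos (π / 2 - φ / 2) / sin (π / 2 - φ / 2) - φ := by
  rw [tanHalfSub, tan_eq_sin_div_cos, cos_pi_div_two_sub, sin_pi_div_two_sub]

lemma tanHalfSub_074_pi_neg : tanHalfSub (0.74 * π) < 0 := by
  have hπ₁ := pi_gt_d6
  have hπ₂ := pi_lt_d6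
  set u := 0.13 * π with hu
  have hu₀ : 0 < u := by positivity
  have hu₁ : |u| ≤ 1 := by rw [abs_of_pos hu₀]; linarith
  have hsin : u - u ^ 3 / 6 < sin u := sin_gt_sub_cube hu₀
  have hcos : cos u ≤ 1 - u ^ 2 / 2 + u ^ 4 * (5 / 96) := by
    have := (abs_le.1 (cos_bound hu₁)).2
    rw [abs_of_pos hu₀] at this
    linarith
  have hsin₀ : 0 < sin u := by nlinarith
  have key : cos u < 0.74 * π * sin u := by nlinarith
  rw [tanHalfSub_eq_cos_div_sin_sub, show π / 2 - 0.74 * π / 2 = u by ring, sub_neg,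
    div_lt_iff₀ hsin₀]
  linarith

lemma tanHalfSub_0745_pi_pos : 0 < tanHalfSub (0.745 * π) := by
  have hπ₁ := pi_gt_d6
  have hπ₂ := pi_lt_d6
  set u := 0.1275 * π with hu
  have hu₀ : 0 < u := by positivity
  have hu₁ : |u| ≤ 1 := by rw [abs_of_pos hu₀]; linarith
  have hsin : sin u ≤ u - u ^ 3 / 6 + u ^ 5 / 100 := by
    have := (abs_le.1 (sin_bound hu₁)).2
    rw [abs_of_pos hu₀] at this
    linarith
  have hcos : 1 - u ^ 2 / 2 ≤ cos u := one_sub_sq_div_two_le_cos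
  have hsin₀ : 0 < sin u := by nlinarith [sin_gt_sub_cube hu₀]
  have hu₂ : 0.4005 < u := by linarith
  have hu₃ : u < 0.4006 := by linarith
  have hsin₁ : sin u < 0.3901 := by
    have : 0.4005 ^ 3 < u ^ 3 := by gcongr
    have : u ^ 5 < 0.4006 ^ 5 := by gcongr
    linarith
  have hcos₁ : 0.9197 < cos u := by nlinarith
  have key : 0.745 * π * sin u < cos u := by nlinarith
  rw [tanHalfSub_eq_cos_div_sin_sub, show π / 2 - 0.745 * π / 2 = u by ring, sub_pos,
    lt_div_iff₀ hsin₀]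
  linarith

noncomputable def avgEnergyCost (φ : ℝ) : ℝ := φ / sin (φ / 2) ^ 2

lemma hasDerivAt_avgEnergyCost {φ : ℝ} (hφ : sin (φ / 2) ≠ 0) :
    HasDerivAt avgEnergyCost ((sin (φ / 2) - φ * cos (φ / 2)) / sin (φ / 2) ^ 3) φ := by
  have hhalf : HasDerivAt (fun x : ℝ ↦ x / 2) (1 / 2) φ := (hasDerivAt_id φ).div_const 2
  refine ((hasDerivAt_id' φ).div (hhalf.sin.pow 2) (pow_ne_zero 2 hφ)).congr_deriv ?_
  simp only [Pi.pow_apply]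
  field_simp
  ring

lemma deriv_avgEnergyCost {φ : ℝ} (hφ : φ ∈ Ioo 0 π) :
    deriv avgEnergyCost φ = cos (φ / 2) / sin (φ / 2) ^ 3 * tanHalfSub φ := by
  have hcos := cos_half_pos (Ioo_subset_Ico_self hφ)
  rw [(hasDerivAt_avgEnergyCost (sin_half_pos (Ioo_subset_Ioc_self hφ)).ne').deriv,
    tanHalfSub, tan_eq_sin_div_cos]
  field_simp

lemma continuousOn_avgEnergyCost : ContinuousOn avgEnergyCost (Ioc 0 π) := fun _ hφ ↦
  (hasDerivAt_avgEnergyCost (sin_half_pos hφ).ne').continuousAt.continuousWithinAt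

lemma strictAntiOn_avgEnergyCost {r : ℝ} (hr : r ≤ π)
    (h : ∀ φ ∈ Ioo 0 r, tanHalfSub φ < 0) : StrictAntiOn avgEnergyCost (Ioc 0 r) := by
  refine strictAntiOn_of_deriv_neg (convex_Ioc 0 r)
    (continuousOn_avgEnergyCost.mono (Ioc_subset_Ioc_right hr)) fun φ hφ ↦ ?_
  rw [interior_Ioc] at hφ
  have hφ' : φ ∈ Ioo 0 π := ⟨hφ.1, hφ.2.trans_le hr⟩
  have := cos_half_pos (Ioo_subset_Ico_self hφ')
  have := sin_half_pos (Ioo_subset_Ioc_self hφ')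
  rw [deriv_avgEnergyCost hφ']
  exact mul_neg_of_pos_of_neg (by positivity) (h φ hφ)

lemma strictMonoOn_avgEnergyCost {r : ℝ} (hr : 0 < r)
    (h : ∀ φ ∈ Ioo r π, 0 < tanHalfSub φ) : StrictMonoOn avgEnergyCost (Icc r π) := by
  refine strictMonoOn_of_deriv_pos (convex_Icc r π)
    (continuousOn_avgEnergyCost.mono (Icc_subset_Ioc hr le_rfl)) fun φ hφ ↦ ?_
  rw [interior_Icc] at hφ
  have hφ' : φ ∈ Ioo 0 π := ⟨hr.trans hφ.1, hφ.2⟩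
  have := cos_half_pos (Ioo_subset_Ico_self hφ')
  have := sin_half_pos (Ioo_subset_Ioc_self hφ')
  rw [deriv_avgEnergyCost hφ']
  exact mul_pos (by positivity) (h φ hφ)

/-- There exists a unique `φ* ∈ (0, π)` with `tan(φ*/2) = φ*`; the function
`f(φ) = φ / sin²(φ/2)` attains a strict global minimum on `(0, π]` at `φ*`, and
`0.74·π < φ* < 0.745·π`.  This `φ* ≈ 0.742π` minimizes the average energy cost
`φ₀ · csc²(φ₀/2)` of the probabilistic counter-diabatic gate implementation. -/
theorem optimal_probabilistic_gate_angle :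
    ∃ φstar : ℝ,
      (φstar ∈ Set.Ioo 0 Real.pi ∧ Real.tan (φstar / 2) = φstar) ∧
      (∀ ψ : ℝ, ψ ∈ Set.Ioo 0 Real.pi → Real.tan (ψ / 2) = ψ → ψ = φstar) ∧
      (∀ ψ : ℝ, ψ ∈ Set.Ioc 0 Real.pi → ψ ≠ φstar →
        φstar / Real.sin (φstar / 2) ^ 2 < ψ / Real.sin (ψ / 2) ^ 2) ∧
      0.74 * Real.pi < φstar ∧ φstar < 0.745 * Real.pi := by
  have hπ := pi_pos
  obtain ⟨φs, ⟨hlo, hhi⟩, hroot⟩ : ∃ φs ∈ Ioo (0.74 * π) (0.745 * π), tanHalfSub φs = 0 :=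
    intermediate_value_Ioo (by linarith)
      (continuousOn_tanHalfSub.mono (Icc_subset_Ico (by positivity) (by linarith)))
      ⟨tanHalfSub_074_pi_neg, tanHalfSub_0745_pi_pos⟩
  have hφs : φs ∈ Ioo 0 π := ⟨by linarith, by linarith⟩
  have hneg : ∀ φ ∈ Ioo 0 φs, tanHalfSub φ < 0 := fun φ ↦
    strictConvexOn_tanHalfSub.neg_of_mem_Ioo (left_mem_Ico.2 hπ) (Ioo_subset_Ico_self hφs)
      tanHalfSub_zero hroot
  have hpos : ∀ φ ∈ Ioo φs π, 0 < tanHalfSub φ := fun φ hφ ↦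
    strictConvexOn_tanHalfSub.pos_of_lt (left_mem_Ico.2 hπ) ⟨by linarith [hφ.1], hφ.2⟩
      tanHalfSub_zero hroot hφs.1 hφ.1
  refine ⟨φs, ⟨hφs, sub_eq_zero.1 hroot⟩, fun ψ hψ hψroot ↦ ?_,
    fun ψ hψ hne ↦ ?_, hlo, hhi⟩
  · have hψ0 : tanHalfSub ψ = 0 := sub_eq_zero.2 hψroot
    by_contra hne
    rcases lt_or_gt_of_ne hne with h | h
    · exact (hneg ψ ⟨hψ.1, h⟩).ne hψ0
    · exact (hpos ψ ⟨h, hψ.2⟩).ne' hψ0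
  · rcases lt_or_gt_of_ne hne with h | h
    · exact strictAntiOn_avgEnergyCost hφs.2.le hneg ⟨hψ.1, h.le⟩ ⟨hφs.1, le_rfl⟩ h
    · exact strictMonoOn_avgEnergyCost hφs.1 hpos ⟨le_rfl, hφs.2.le⟩ ⟨h.le, hψ.2⟩ h
end
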